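/- arXiv:2105.03106 — 7 statements merged into one kernel-verified Lean document; each statement's English description precedes it below -/
import Mathlib

section
/- If a string S has periods p and q with p + q ≤ |S|, then gcd(p, q) is also a period of S. -/
lemma fwAux {α : Type*} : ∀ (m : ℕ) (S : ℕ → α) (n p q : ℕ), p + q ≤ m → 0 < p → 0 < q →
    (∀ i, i + p < n → S i = S (i + p)) →
    (∀ i, i + q < n → S i = S (i + q)) →
    p + q ≤ n → ∀ i, i + Nat.gcd p q < n → S i = S (i + Nat.gcd p q) := by
  intro m
  induction m with
  | zero => intro S n p q hm hp hq; omega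
  | succ m ih =>
    intro S n p q hm hp hq hperp hperq hsum i hi
    rcases lt_trichotomy p q with hpq | rfl | hqp
    · have hg : Nat.gcd p (q - p) = Nat.gcd p q := Nat.gcd_sub_self_right (le_of_lt hpq)
      have hper' : ∀ j, j + (q - p) < n → S j = S (j + (q - p)) := by
        intro j hj
        by_cases h : j + q < n
        · have e1 := hperq j h
          have e2 := hperp (j + (q - p)) (by omega)
          have h2 : j + (q - p) + p = j + q := by omega
          rw [h2] at e2
          rw [e1, e2]
        · have e1 := hperp (j - p) (by omega)
          have e2 := hperq (j - p) (by omega)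
          have h1 : j - p + p = j := by omega
          have h2 : j - p + q = j + (q - p) := by omega
          rw [h1] at e1; rw [h2] at e2
          rw [← e1, e2]
      rw [← hg] at hi ⊢
      exact ih S n p (q - p) (by omega) hp (by omega) hperp hper' (by omega) i hi
    · rw [Nat.gcd_self] at hi ⊢
      exact hperp i hi
    · have hg : Nat.gcd (p - q) q = Nat.gcd p q := Nat.gcd_sub_self_left (le_of_lt hqp)
      have hper' : ∀ j, j + (p - q) < n → S j = S (j + (p - q)) := by
        intro j hj
        by_cases h : j + p < n
        · have e1 := hperp j h
          have e2 := hperq (j + (p - q)) (by omega)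
          have h2 : j + (p - q) + q = j + p := by omega
          rw [h2] at e2
          rw [e1, e2]
        · have e1 := hperq (j - q) (by omega)
          have e2 := hperp (j - q) (by omega)
          have h1 : j - q + q = j := by omega
          have h2 : j - q + p = j + (p - q) := by omega
          rw [h1] at e1; rw [h2] at e2
          rw [← e1, e2]
      rw [← hg] at hi ⊢
      exact ih S n (p - q) q (by omega) (by omega) hq hper' hperq (by omega) i hi

/-- Weak periodicity lemma (Fine and Wilf): if a string `S` (of length `n`,
modelled as a function on positions `0, …, n-1`) has periods `p` and `q`
with `p + q ≤ n`, then `gcd p q` is also a period of `S`. -/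
theorem stmt1 {α : Type*} (S : ℕ → α) (n p q : ℕ) (hp : 0 < p) (hq : 0 < q)
    (hperp : ∀ i, i + p < n → S i = S (i + p))
    (hperq : ∀ i, i + q < n → S i = S (i + q))
    (hsum : p + q ≤ n) :
    ∀ i, i + Nat.gcd p q < n → S i = S (i + Nat.gcd p q) := by
  exact fwAux (p + q) S n p q le_rfl hp hq hperp hperq hsum
end

section
/- Let D ⊆ Z+ be a d-cover, i.e., there exists a function h such that for all positive integers i, j we have 0 ≤ h(i, j) < d and i + h(i, j) ∈ D and j + h(i, j) ∈ D. Then for strings S and T, if there exist positions i in S and j in T with S[i..i+ℓ) = T[j..j+ℓ) for some ℓ ≥ d, then the length of the longest common substring of S and T equals max over i' ∈ D ∩ [1,|S|], j' ∈ D ∩ [1,|T|] of LCP((S[1..i'))^R, (T[1..j'))^R) + LCP(S[i'..|S|], T[j'..|T|]). -/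
/-- Length of a longest common substring of the 1-indexed strings
`S` (length `nS`) and `T` (length `nT`). -/
noncomputable def lcsLen {α : Type*} (S T : ℕ → α) (nS nT : ℕ) : ℕ :=
  sSup {ℓ | ∃ i j, 1 ≤ i ∧ 1 ≤ j ∧ i + ℓ ≤ nS + 1 ∧ j + ℓ ≤ nT + 1 ∧
    ∀ a < ℓ, S (i + a) = T (j + a)}

lemma natSSup_le' {s : Set ℕ} {b : ℕ} (hb : ∀ x ∈ s, x ≤ b) : sSup s ≤ b := by
  rcases s.eq_empty_or_nonempty with rfl | hne
  · simp [csSup_empty]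
  · exact csSup_le hne hb

/-- If `D` is a `d`-cover and `S`, `T` have a common substring of length at least `d`,
then the length of the LCS equals the maximum over anchors `i' ∈ D ∩ [1,|S|]`,
`j' ∈ D ∩ [1,|T|]` of `LCP((S[1..i'))ᴿ, (T[1..j'))ᴿ) + LCP(S[i'..|S|], T[j'..|T|])`. -/
theorem stmt6 {α : Type*} (S T : ℕ → α) (nS nT : ℕ) (D : Set ℕ) (h : ℕ → ℕ → ℕ)
    (d : ℕ) (hd : 0 < d)
    (hDpos : ∀ x ∈ D, 0 < x)
    (hcover : ∀ i j, 0 < i → 0 < j → h i j < d ∧ i + h i j ∈ D ∧ j + h i j ∈ D)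
    (hocc : ∃ i j ℓ, d ≤ ℓ ∧ 1 ≤ i ∧ 1 ≤ j ∧ i + ℓ ≤ nS + 1 ∧ j + ℓ ≤ nT + 1 ∧
      ∀ a < ℓ, S (i + a) = T (j + a)) :
    lcsLen S T nS nT =
      sSup {v | ∃ i' ∈ D, i' ≤ nS ∧ ∃ j' ∈ D, j' ≤ nT ∧
        v = sSup {ℓ | ℓ < i' ∧ ℓ < j' ∧ ∀ a < ℓ, S (i' - 1 - a) = T (j' - 1 - a)} +
            sSup {ℓ | i' + ℓ ≤ nS + 1 ∧ j' + ℓ ≤ nT + 1 ∧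
              ∀ a < ℓ, S (i' + a) = T (j' + a)}} := by
  classical
  set A : Set ℕ := {ℓ | ∃ i j, 1 ≤ i ∧ 1 ≤ j ∧ i + ℓ ≤ nS + 1 ∧ j + ℓ ≤ nT + 1 ∧
    ∀ a < ℓ, S (i + a) = T (j + a)} with hAdef
  set back : ℕ → ℕ → Set ℕ := fun i' j' =>
    {ℓ | ℓ < i' ∧ ℓ < j' ∧ ∀ a < ℓ, S (i' - 1 - a) = T (j' - 1 - a)} with hbackdef
  set fwd : ℕ → ℕ → Set ℕ := fun i' j' =>
    {ℓ | i' + ℓ ≤ nS + 1 ∧ j' + ℓ ≤ nT + 1 ∧ ∀ a < ℓ, S (i' + a) = T (j' + a)} with hfwddef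
  set V : Set ℕ := {v | ∃ i' ∈ D, i' ≤ nS ∧ ∃ j' ∈ D, j' ≤ nT ∧
      v = sSup (back i' j') + sSup (fwd i' j')} with hVdef
  show sSup A = sSup V
  -- basic boundedness facts
  have hAbdd : BddAbove A := by
    refine ⟨nS, fun ℓ hℓ => ?_⟩
    obtain ⟨i, j, hi, hj, h1, h2, _⟩ := hℓ
    omega
  have hbackBdd : ∀ i' j', BddAbove (back i' j') :=
    fun i' j' => ⟨i', fun ℓ hℓ => le_of_lt hℓ.1⟩
  have hfwdBdd : ∀ i' j', i' ∈ D → BddAbove (fwd i' j') := by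
    intro i' j' hi'
    refine ⟨nS, fun ℓ hℓ => ?_⟩
    have := hDpos i' hi'
    have := hℓ.1
    omega
  have hVbdd : BddAbove V := by
    refine ⟨nS + nS, fun v hv => ?_⟩
    obtain ⟨i', hi'D, hi'nS, j', hj'D, hj'nT, rfl⟩ := hv
    have h1 : sSup (back i' j') ≤ nS :=
      natSSup_le' (fun x hx => by have := hx.1; omega)
    have h2 : sSup (fwd i' j') ≤ nS := by
      refine natSSup_le' (fun x hx => ?_)
      have := hDpos i' hi'D
      have := hx.1
      omega
    omega
  -- A is nonempty with an element ≥ d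
  obtain ⟨i0, j0, ℓ0, hdℓ0, hi0, hj0, hi0n, hj0n, hm0⟩ := hocc
  have hℓ0A : ℓ0 ∈ A := ⟨i0, j0, hi0, hj0, hi0n, hj0n, hm0⟩
  have hAne : A.Nonempty := ⟨ℓ0, hℓ0A⟩
  have hLmem : sSup A ∈ A := Nat.sSup_mem hAne hAbdd
  set L := sSup A with hLdef
  have hdL : d ≤ L := le_trans hdℓ0 (le_csSup hAbdd hℓ0A)
  obtain ⟨i, j, hi, hj, hiL, hjL, hm⟩ := hLmem
  -- the anchor from the cover
  obtain ⟨hkd, hiD, hjD⟩ := hcover i j hi hj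
  set k := h i j with hkdef
  have hkL : k < L := lt_of_lt_of_le hkd hdL
  have hi'nS : i + k ≤ nS := by omega
  have hj'nT : j + k ≤ nT := by omega
  -- k is in the back set at the anchor
  have hkback : k ∈ back (i + k) (j + k) := by
    refine ⟨by omega, by omega, fun a ha => ?_⟩
    have e1 : i + k - 1 - a = i + (k - 1 - a) := by omega
    have e2 : j + k - 1 - a = j + (k - 1 - a) := by omega
    rw [e1, e2]
    exact hm _ (by omega)
  have hkfwd : L - k ∈ fwd (i + k) (j + k) := by
    refine ⟨by omega, by omega, fun a ha => ?_⟩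
    have e1 : i + k + a = i + (k + a) := by omega
    have e2 : j + k + a = j + (k + a) := by omega
    rw [e1, e2]
    exact hm _ (by omega)
  have hp : k ≤ sSup (back (i + k) (j + k)) := le_csSup (hbackBdd _ _) hkback
  have hq : L - k ≤ sSup (fwd (i + k) (j + k)) := le_csSup (hfwdBdd _ _ hiD) hkfwd
  have hvV : sSup (back (i + k) (j + k)) + sSup (fwd (i + k) (j + k)) ∈ V :=
    ⟨i + k, hiD, hi'nS, j + k, hjD, hj'nT, rfl⟩
  have hle : L ≤ sSup V := by
    have : L ≤ sSup (back (i + k) (j + k)) + sSup (fwd (i + k) (j + k)) := by omega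
    exact le_trans this (le_csSup hVbdd hvV)
  -- other direction
  have hge : sSup V ≤ L := by
    refine csSup_le ⟨_, hvV⟩ (fun v hv => ?_)
    obtain ⟨i', hi'D, hi'n, j', hj'D, hj'n, rfl⟩ := hv
    have hi'pos := hDpos i' hi'D
    have hj'pos := hDpos j' hj'D
    have hbackne : (back i' j').Nonempty :=
      ⟨0, by omega, by omega, fun a ha => by omega⟩
    have hfwdne : (fwd i' j').Nonempty :=
      ⟨0, by omega, by omega, fun a ha => by omega⟩
    obtain ⟨hp1, hp2, hpm⟩ := Nat.sSup_mem hbackne (hbackBdd i' j')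
    obtain ⟨hq1, hq2, hqm⟩ := Nat.sSup_mem hfwdne (hfwdBdd i' j' hi'D)
    set p := sSup (back i' j')
    set q := sSup (fwd i' j')
    have hmemA : p + q ∈ A := by
      refine ⟨i' - p, j' - p, by omega, by omega, by omega, by omega, fun a ha => ?_⟩
      by_cases hap : a < p
      · have e1 : i' - p + a = i' - 1 - (p - 1 - a) := by omega
        have e2 : j' - p + a = j' - 1 - (p - 1 - a) := by omega
        rw [e1, e2]
        exact hpm _ (by omega)
      · have e1 : i' - p + a = i' + (a - p) := by omega
        have e2 : j' - p + a = j' + (a - p) := by omega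
        rw [e1, e2]
        exact hqm _ (by omega)
    exact le_csSup hAbdd hmemA
  omega
end

section
/- Let A be a τ-synchronising set of a string T of length n, with τ ≤ n/2. If a string U of length at least 3τ − 1 with shortest period greater than τ/3 occurs at positions i and j of T, then succ_A(i) − i = succ_A(j) − j and this common value is at most |U| − 2τ, where succ_A(i) = min{j ∈ A ∪ {n − 2τ + 2} : j ≥ i}. -/
variable {α : Type*}

/-- Smallest period of the fragment `T[i..j]` (1-indexed, inclusive). -/
noncomputable def minPerI (T : ℕ → α) (i j : ℕ) : ℕ :=
  sInf {p | 0 < p ∧ ∀ a, i ≤ a → a + p ≤ j → T a = T (a + p)}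

/-- `A` is a τ-synchronising set of the 1-indexed length-`n` string `T`. -/
def SyncSet (T : ℕ → α) (n τ : ℕ) (A : Set ℕ) : Prop :=
  A ⊆ Set.Icc 1 (n - 2 * τ + 1) ∧
  (∀ i j, 1 ≤ i → 1 ≤ j → i + 2 * τ - 1 ≤ n → j + 2 * τ - 1 ≤ n →
    (∀ a < 2 * τ, T (i + a) = T (j + a)) → (i ∈ A ↔ j ∈ A)) ∧
  (∀ i, 1 ≤ i → i ≤ n - 3 * τ + 2 →
    (A ∩ Set.Ico i (i + τ) = ∅ ↔ 3 * minPerI T i (i + 3 * τ - 2) ≤ τ))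

/-- `succ_A(i) = min {j ∈ A ∪ {n - 2τ + 2} : j ≥ i}`. -/
noncomputable def succA (A : Set ℕ) (n τ i : ℕ) : ℕ :=
  sInf ((A ∪ {n - 2 * τ + 2}) ∩ Set.Ici i)

lemma minPerI_mem (T : ℕ → α) (i j : ℕ) :
    minPerI T i j ∈ {p | 0 < p ∧ ∀ a, i ≤ a → a + p ≤ j → T a = T (a + p)} :=
  Nat.sInf_mem ⟨j + 1, Nat.succ_pos j, fun a _ h => absurd h (by omega)⟩

lemma minPerI_pos (T : ℕ → α) (i j : ℕ) : 0 < minPerI T i j := (minPerI_mem T i j).1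

lemma minPerI_per (T : ℕ → α) (i j : ℕ) :
    ∀ a, i ≤ a → a + minPerI T i j ≤ j → T a = T (a + minPerI T i j) := (minPerI_mem T i j).2

lemma minPerI_le (T : ℕ → α) {i j p : ℕ} (hp : 0 < p)
    (h : ∀ a, i ≤ a → a + p ≤ j → T a = T (a + p)) : minPerI T i j ≤ p :=
  Nat.sInf_le ⟨hp, h⟩

/-- Weak Fine–Wilf: on an interval of length ≥ p + q with periods p ≤ q,
the difference q - p is also a period. -/
lemma fw (f : ℕ → α) (L R p q : ℕ) (hpq : p ≤ q) (_hp : 0 < p)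
    (hlen : L + p + q ≤ R + 1)
    (hP : ∀ a, L ≤ a → a + p ≤ R → f a = f (a + p))
    (hQ : ∀ a, L ≤ a → a + q ≤ R → f a = f (a + q)) :
    ∀ a, L ≤ a → a + (q - p) ≤ R → f a = f (a + (q - p)) := by
  intro a ha haR
  rcases le_or_gt (a + q) R with h | h
  · have h1 := hQ a ha h
    have h2 := hP (a + (q - p)) (by omega) (by omega)
    rw [h1, h2]
    congr 1
    omega
  · have h1 := hP (a - p) (by omega) (by omega)
    have h2 := hQ (a - p) (by omega) (by omega)
    rw [show a - p + p = a from by omega] at h1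
    rw [show a - p + q = a + (q - p) from by omega] at h2
    rw [← h1, h2]

/-- If no element of `A` lies in `[i, i + ℓU - 2τ]`, then small-period windows glue
to give the whole occurrence a small period — contradiction. -/
lemma exists_elem (T : ℕ → α) (n τ ℓU i : ℕ) (A : Set ℕ)
    (hτ : 0 < τ) (hA : SyncSet T n τ A) (hlen : 3 * τ - 1 ≤ ℓU) (hi : 1 ≤ i)
    (hin : i + ℓU - 1 ≤ n) (hper : τ < 3 * minPerI T i (i + ℓU - 1)) :
    ∃ s ∈ A, i ≤ s ∧ s ≤ i + ℓU - 2 * τ := by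
  by_contra hc
  push_neg at hc
  have hwin : ∀ a, i ≤ a → a + 3 * τ - 2 ≤ i + ℓU - 1 →
      3 * minPerI T a (a + 3 * τ - 2) ≤ τ := by
    intro a ha ha2
    have h1 : 1 ≤ a := by omega
    have h2 : a ≤ n - 3 * τ + 2 := by omega
    refine (hA.2.2 a h1 h2).mp ?_
    rw [Set.eq_empty_iff_forall_notMem]
    intro s hs
    simp only [Set.mem_inter_iff, Set.mem_Ico] at hs
    obtain ⟨hsA, hs1, hs2⟩ := hs
    exact absurd (hc s hsA (by omega)) (by omega)
  set p := minPerI T i (i + 3 * τ - 2) with hpdef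
  have hp3 : 3 * p ≤ τ := hwin i le_rfl (by omega)
  have hppos : 0 < p := minPerI_pos T i (i + 3 * τ - 2)
  have glue : ∀ m, ∀ b, i ≤ b → b + p ≤ i + 3 * τ - 2 + m → b + p ≤ i + ℓU - 1 →
      T b = T (b + p) := by
    intro m
    induction m with
    | zero => intro b hb hb2 _; exact minPerI_per T i (i + 3 * τ - 2) b hb (by omega)
    | succ m ih =>
      intro b hb hb2 hb3
      rcases le_or_gt (b + p) (i + 3 * τ - 2 + m) with h | h
      · exact ih b hb h hb3
      · set e := i + 3 * τ - 1 + m with he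
        have hbe : b + p = e := by omega
        set a := i + m + 1 with ha
        have haw : a + 3 * τ - 2 = e := by omega
        have hq3 : 3 * minPerI T a (a + 3 * τ - 2) ≤ τ := hwin a (by omega) (by omega)
        have hqpos : 0 < minPerI T a (a + 3 * τ - 2) := minPerI_pos T a (a + 3 * τ - 2)
        set q := minPerI T a (a + 3 * τ - 2) with hqdef
        have hQ : ∀ c, a ≤ c → c + q ≤ e → T c = T (c + q) := by
          intro c hca hce
          exact minPerI_per T a (a + 3 * τ - 2) c hca (by omega)
        have hP : ∀ c, a ≤ c → c + p ≤ e - 1 → T c = T (c + p) :=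
          fun c hca hce => ih c (by omega) (by omega) (by omega)
        have h1 : T (e - q) = T e := by
          have := hQ (e - q) (by omega) (by omega)
          rwa [show e - q + q = e from by omega] at this
        have hgoal : T (e - p) = T e := by
          rcases lt_trichotomy p q with hlt | heq | hgt
          · have hfw := fw T a (e - 1) p q hlt.le hppos (by omega) hP
              (fun c hca hce => hQ c hca (by omega))
            have h2 := hfw (e - q) (by omega) (by omega)
            rw [show e - q + (q - p) = e - p from by omega] at h2
            rw [← h2, h1]
          · rw [heq]; exact h1
          · have hfw := fw T a (e - 1) q p hgt.le hqpos (by omega)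
              (fun c hca hce => hQ c hca (by omega)) hP
            have h2 := hfw (e - p) (by omega) (by omega)
            rw [show e - p + (p - q) = e - q from by omega] at h2
            rw [h2, h1]
        rw [show b = e - p from by omega, show e - p + p = e from by omega]
        exact hgoal
  have hfin : minPerI T i (i + ℓU - 1) ≤ p :=
    minPerI_le T hppos (fun b hb hb2 => glue ℓU b hb (by omega) hb2)
  omega

/-- Transfer the period lower bound from the occurrence at `i` to the one at `j`. -/
lemma minPer_transfer (T : ℕ → α) (ℓU i j : ℕ) (hl : 1 ≤ ℓU)
    (hocc : ∀ a < ℓU, T (i + a) = T (j + a)) :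
    minPerI T i (i + ℓU - 1) ≤ minPerI T j (j + ℓU - 1) := by
  set q := minPerI T j (j + ℓU - 1) with hq
  have hqpos : 0 < q := minPerI_pos T j (j + ℓU - 1)
  refine minPerI_le T hqpos (fun a ha ha2 => ?_)
  have h1 : T a = T (i + (a - i)) := by congr 1; omega
  have h2 : T (i + (a - i)) = T (j + (a - i)) := hocc (a - i) (by omega)
  have h3 : T (j + (a - i)) = T (j + (a - i) + q) :=
    minPerI_per T j (j + ℓU - 1) (j + (a - i)) (by omega) (by omega)
  have h4 : T (j + (a - i) + q) = T (i + (a - i + q)) := by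
    rw [show j + (a - i) + q = j + (a - i + q) from by omega]
    exact (hocc (a - i + q) (by omega)).symm
  have h5 : T (i + (a - i + q)) = T (a + q) := by congr 1; omega
  rw [h1, h2, h3, h4, h5]

lemma succ_le (T : ℕ → α) (n τ ℓU i j : ℕ) (A : Set ℕ)
    (hτ : 0 < τ) (hτn : 2 * τ ≤ n) (hA : SyncSet T n τ A)
    (hlen : 3 * τ - 1 ≤ ℓU)
    (hi : 1 ≤ i) (hj : 1 ≤ j)
    (hin : i + ℓU - 1 ≤ n) (hjn : j + ℓU - 1 ≤ n)
    (hocc : ∀ a < ℓU, T (i + a) = T (j + a))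
    (hper : τ < 3 * minPerI T i (i + ℓU - 1)) :
    succA A n τ j - j ≤ succA A n τ i - i ∧ succA A n τ i - i ≤ ℓU - 2 * τ := by
  obtain ⟨s, hsA, hs1, hs2⟩ := exists_elem T n τ ℓU i A hτ hA hlen hi hin hper
  have hmemi : succA A n τ i ∈ (A ∪ {n - 2 * τ + 2}) ∩ Set.Ici i :=
    Nat.sInf_mem ⟨n - 2 * τ + 2, Or.inr rfl, by simp only [Set.mem_Ici]; omega⟩
  have hlei : succA A n τ i ≤ s := Nat.sInf_le ⟨Or.inl hsA, hs1⟩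
  have hige : i ≤ succA A n τ i := hmemi.2
  have hsucc_le : succA A n τ i ≤ i + ℓU - 2 * τ := le_trans hlei hs2
  have hsuccA : succA A n τ i ∈ A := by
    rcases hmemi.1 with h | h
    · exact h
    · exfalso
      simp only [Set.mem_singleton_iff] at h
      omega
  set d := succA A n τ i - i with hd
  have hsd : succA A n τ i = i + d := by omega
  have hdle : d ≤ ℓU - 2 * τ := by omega
  refine ⟨?_, hdle⟩
  have hAjd : j + d ∈ A := by
    have := hA.2.1 (i + d) (j + d) (by omega) (by omega) (by omega) (by omega)
      (fun a ha =>
        calc T (i + d + a) = T (i + (d + a)) := by congr 1; omega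
          _ = T (j + (d + a)) := hocc (d + a) (by omega)
          _ = T (j + d + a) := by congr 1; omega)
    rw [← hsd] at this
    exact this.mp hsuccA
  have hlej : succA A n τ j ≤ j + d := Nat.sInf_le ⟨Or.inl hAjd, by simp only [Set.mem_Ici]; omega⟩
  omega

/-- If a string `U` of length `ℓU ≥ 3τ - 1` with shortest period `> τ/3` occurs at
positions `i` and `j` of `T`, then `succ_A(i) - i = succ_A(j) - j ≤ |U| - 2τ`. -/
theorem stmt7 (T : ℕ → α) (n τ ℓU i j : ℕ) (A : Set ℕ)
    (hτ : 0 < τ) (hτn : 2 * τ ≤ n) (hA : SyncSet T n τ A)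
    (hlen : 3 * τ - 1 ≤ ℓU)
    (hi : 1 ≤ i) (hj : 1 ≤ j)
    (hin : i + ℓU - 1 ≤ n) (hjn : j + ℓU - 1 ≤ n)
    (hocc : ∀ a < ℓU, T (i + a) = T (j + a))
    (hper : τ < 3 * minPerI T i (i + ℓU - 1)) :
    succA A n τ i - i = succA A n τ j - j ∧ succA A n τ i - i ≤ ℓU - 2 * τ := by
  have hocc' : ∀ a < ℓU, T (j + a) = T (i + a) := fun a ha => (hocc a ha).symm
  have hperj : τ < 3 * minPerI T j (j + ℓU - 1) := by
    have := minPer_transfer T ℓU i j (by omega) hocc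
    omega
  have H1 := succ_le T n τ ℓU i j A hτ hτn hA hlen hi hj hin hjn hocc hper
  have H2 := succ_le T n τ ℓU j i A hτ hτn hA hlen hj hi hjn hin hocc' hperj
  exact ⟨le_antisymm H2.1 H1.1, H1.2⟩
end

section
/- Let U, V be strings and k ≥ 1, and let (U^Δ, V^∇) be a (U,V)_{k-1}-maxpair with p = LCP(U^Δ, V^∇). Suppose LCP_k(U, V) > p, and let c be any letter. Then: if U[p+1] ≠ c and V[p+1] ≠ c, the pair (U^{Δ∪{(p+1,c)}}, V^{∇∪{(p+1,c)}}) is a (U,V)_k-maxpair; if U[p+1] ≠ c = V[p+1], the pair (U^{Δ∪{(p+1,c)}}, V^∇) is a (U,V)_k-maxpair; if U[p+1] = c ≠ V[p+1], the pair (U^Δ, V^{∇∪{(p+1,c)}}) is a (U,V)_k-maxpair; and if LCP_k(U, V) = p, then (U^Δ, V^∇) itself is a (U,V)_k-maxpair. -/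
variable {α : Type*}

/-- Mismatch information of two length-`m` strings (0-indexed). -/
def MI (U U' : ℕ → α) (m : ℕ) : Set (ℕ × α) :=
  {p | p.1 < m ∧ U p.1 ≠ U' p.1 ∧ p.2 = U' p.1}

/-- Length of the longest common prefix of strings `U`, `V` of lengths `mU`, `mV`. -/
noncomputable def lcpF (U V : ℕ → α) (mU mV : ℕ) : ℕ :=
  sSup {ℓ | ℓ ≤ mU ∧ ℓ ≤ mV ∧ ∀ a < ℓ, U a = V a}

/-- `LCP_k`: the maximum `ℓ` such that the length-`ℓ` prefixes of `U` and `V`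
have Hamming distance at most `k`. -/
noncomputable def lcpK (k : ℕ) (U V : ℕ → α) (mU mV : ℕ) : ℕ :=
  sSup {ℓ | ℓ ≤ mU ∧ ℓ ≤ mV ∧ ({a | a < ℓ ∧ U a ≠ V a}).ncard ≤ k}

/-- `(U', V')` forms a `(U,V)_k`-maxpair (0-indexed positions). -/
def IsMaxpair (k : ℕ) (U V U' V' : ℕ → α) (mU mV : ℕ) : Prop :=
  ∀ a : ℕ,
    (a < lcpK k U V mU mV ∧ U a ≠ V a → U' a = V' a) ∧
    (¬(a < lcpK k U V mU mV ∧ U a ≠ V a) →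
      (a < mU → U' a = U a) ∧ (a < mV → V' a = V a))

lemma mismFin (U V : ℕ → α) (ℓ : ℕ) : ({a | a < ℓ ∧ U a ≠ V a}).Finite :=
  (Set.finite_Iio ℓ).subset fun a ha => ha.1

lemma lcpK_spec (k : ℕ) (U V : ℕ → α) (mU mV : ℕ) :
    lcpK k U V mU mV ≤ mU ∧ lcpK k U V mU mV ≤ mV ∧
      ({a | a < lcpK k U V mU mV ∧ U a ≠ V a}).ncard ≤ k := by
  have : lcpK k U V mU mV ∈ {ℓ | ℓ ≤ mU ∧ ℓ ≤ mV ∧ ({a | a < ℓ ∧ U a ≠ V a}).ncard ≤ k} := by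
    apply Nat.sSup_mem
    · exact ⟨0, by simp⟩
    · exact ⟨mU, fun x hx => hx.1⟩
  exact this

lemma le_lcpK {k : ℕ} {U V : ℕ → α} {mU mV ℓ : ℕ}
    (h : ℓ ≤ mU ∧ ℓ ≤ mV ∧ ({a | a < ℓ ∧ U a ≠ V a}).ncard ≤ k) : ℓ ≤ lcpK k U V mU mV :=
  le_csSup ⟨mU, fun x hx => hx.1⟩ h

lemma lcpF_spec (U V : ℕ → α) (mU mV : ℕ) :
    lcpF U V mU mV ≤ mU ∧ lcpF U V mU mV ≤ mV ∧ ∀ a < lcpF U V mU mV, U a = V a := by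
  have : lcpF U V mU mV ∈ {ℓ | ℓ ≤ mU ∧ ℓ ≤ mV ∧ ∀ a < ℓ, U a = V a} := by
    apply Nat.sSup_mem
    · exact ⟨0, by simp⟩
    · exact ⟨mU, fun x hx => hx.1⟩
  exact this

lemma le_lcpF {U V : ℕ → α} {mU mV ℓ : ℕ}
    (h : ℓ ≤ mU ∧ ℓ ≤ mV ∧ ∀ a < ℓ, U a = V a) : ℓ ≤ lcpF U V mU mV :=
  le_csSup ⟨mU, fun x hx => hx.1⟩ h

/-- `lcpF U' V' = lcpK (k-1) U V` for a `(k-1)`-maxpair. -/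
lemma p_eq (k mU mV : ℕ) (U U' V V' : ℕ → α)
    (hmax : IsMaxpair (k - 1) U V U' V' mU mV) :
    lcpF U' V' mU mV = lcpK (k - 1) U V mU mV := by
  set L' := lcpK (k - 1) U V mU mV with hL'
  obtain ⟨hL'U, hL'V, hL'c⟩ := lcpK_spec (k - 1) U V mU mV
  have hagree : ∀ a < L', U' a = V' a := by
    intro a ha
    by_cases hne : U a = V a
    · have h2 := (hmax a).2 (fun hh => hh.2 hne)
      rw [h2.1 (lt_of_lt_of_le ha hL'U), h2.2 (lt_of_lt_of_le ha hL'V), hne]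
    · exact (hmax a).1 ⟨ha, hne⟩
  have hge : L' ≤ lcpF U' V' mU mV := le_lcpF ⟨hL'U, hL'V, hagree⟩
  have hle : lcpF U' V' mU mV ≤ L' := by
    by_contra hlt
    push_neg at hlt
    obtain ⟨hFU, hFV, hFagree⟩ := lcpF_spec U' V' mU mV
    have hUm : L' < mU := lt_of_lt_of_le hlt hFU
    have hVm : L' < mV := lt_of_lt_of_le hlt hFV
    have hnotmem : ¬ (L' + 1 ≤ mU ∧ L' + 1 ≤ mV ∧
        ({a | a < L' + 1 ∧ U a ≠ V a}).ncard ≤ k - 1) :=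
      fun h => Nat.not_succ_le_self _ (le_lcpK h)
    have hmm : U L' ≠ V L' := by
      intro he
      apply hnotmem
      refine ⟨hUm, hVm, ?_⟩
      have hset : {a | a < L' + 1 ∧ U a ≠ V a} = {a | a < L' ∧ U a ≠ V a} := by
        ext a
        simp only [Set.mem_setOf_eq]
        constructor
        · rintro ⟨h1, h2⟩
          refine ⟨?_, h2⟩
          rcases Nat.lt_succ_iff_lt_or_eq.mp h1 with h | h
          · exact h
          · exact absurd (h ▸ he) h2
        · exact fun ⟨h1, h2⟩ => ⟨Nat.lt_succ_of_lt h1, h2⟩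
      rw [hset]; exact hL'c
    have h2 := (hmax L').2 (fun hh => lt_irrefl _ hh.1)
    have h3 := hFagree L' hlt
    rw [h2.1 hUm, h2.2 hVm] at h3
    exact hmm h3
  omega

/-- Under `p < lcpK k`: mismatch at `p` and no mismatch strictly between. -/
lemma mism_facts (k mU mV : ℕ) (hk : 1 ≤ k) (U V : ℕ → α)
    (hpL : lcpK (k - 1) U V mU mV < lcpK k U V mU mV) :
    U (lcpK (k - 1) U V mU mV) ≠ V (lcpK (k - 1) U V mU mV) ∧
      ∀ a, lcpK (k - 1) U V mU mV < a → a < lcpK k U V mU mV → U a = V a := by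
  set p := lcpK (k - 1) U V mU mV with hpdef
  set L := lcpK k U V mU mV with hLdef
  obtain ⟨hLU, hLV, hLc⟩ := lcpK_spec k U V mU mV
  obtain ⟨hpU, hpV, hpc⟩ := lcpK_spec (k - 1) U V mU mV
  rw [← hLdef] at hLc hLU hLV
  rw [← hpdef] at hpc hpU hpV
  have hp1U : p + 1 ≤ mU := le_trans hpL hLU
  have hp1V : p + 1 ≤ mV := le_trans hpL hLV
  have hnotmem : ¬ (p + 1 ≤ mU ∧ p + 1 ≤ mV ∧
      ({a | a < p + 1 ∧ U a ≠ V a}).ncard ≤ k - 1) :=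
    fun h => Nat.not_succ_le_self _ (le_lcpK h)
  have hcnt1 : ¬ ({a | a < p + 1 ∧ U a ≠ V a}).ncard ≤ k - 1 :=
    fun h => hnotmem ⟨hp1U, hp1V, h⟩
  have hmm : U p ≠ V p := by
    intro he
    apply hcnt1
    have hset : {a | a < p + 1 ∧ U a ≠ V a} = {a | a < p ∧ U a ≠ V a} := by
      ext a
      simp only [Set.mem_setOf_eq]
      constructor
      · rintro ⟨h1, h2⟩
        refine ⟨?_, h2⟩
        rcases Nat.lt_succ_iff_lt_or_eq.mp h1 with h | h
        · exact h
        · exact absurd (h ▸ he) h2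
      · exact fun ⟨h1, h2⟩ => ⟨Nat.lt_succ_of_lt h1, h2⟩
    rw [hset]; exact hpc
  refine ⟨hmm, ?_⟩
  intro a hpa haL
  by_contra hne
  have hcnt : k ≤ ({x | x < p + 1 ∧ U x ≠ V x}).ncard := by omega
  have hnot : a ∉ {x | x < p + 1 ∧ U x ≠ V x} := fun h => by
    have := h.1; omega
  have hsub : insert a {x | x < p + 1 ∧ U x ≠ V x} ⊆ {x | x < L ∧ U x ≠ V x} := by
    rintro x (rfl | hx)
    · exact ⟨haL, hne⟩
    · exact ⟨lt_of_lt_of_le hx.1 (Nat.succ_le_of_lt hpL), hx.2⟩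
  have hins : (insert a {x | x < p + 1 ∧ U x ≠ V x}).ncard =
      ({x | x < p + 1 ∧ U x ≠ V x}).ncard + 1 :=
    Set.ncard_insert_of_notMem hnot (mismFin U V (p + 1))
  have hle2 : (insert a {x | x < p + 1 ∧ U x ≠ V x}).ncard ≤
      ({x | x < L ∧ U x ≠ V x}).ncard :=
    Set.ncard_le_ncard hsub (mismFin U V L)
  omega

lemma MI_union (U U' U'' : ℕ → α) (mU pp : ℕ) (c : α)
    (h : MI U U'' mU = MI U U' mU ∪ {(pp, c)}) :
    U'' pp = c ∧ ∀ a < mU, a ≠ pp → U'' a = U' a := by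
  have hpc : (pp, c) ∈ MI U U'' mU := by
    rw [h]; exact Set.mem_union_right _ rfl
  refine ⟨hpc.2.2.symm, ?_⟩
  intro a ha hane
  by_cases h1 : U a = U' a
  · have : U'' a = U a := by
      by_contra h3
      have hmem : (a, U'' a) ∈ MI U U'' mU := ⟨ha, fun e => h3 e.symm, rfl⟩
      rw [h] at hmem
      rcases hmem with hm | hm
      · exact hm.2.1 h1
      · have : a = pp := (Prod.mk.injEq _ _ _ _).mp hm |>.1
        exact hane this
    rw [this, h1]
  · have hmem : (a, U' a) ∈ MI U U' mU := ⟨ha, h1, rfl⟩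
    have hmem2 : (a, U' a) ∈ MI U U'' mU := by
      rw [h]; exact Set.mem_union_left _ hmem
    exact hmem2.2.2.symm

lemma build (k mU mV pp : ℕ) (hk : 1 ≤ k) (U V U'' V'' U' V' : ℕ → α)
    (hmax : IsMaxpair (k - 1) U V U' V' mU mV)
    (hpe : pp = lcpK (k - 1) U V mU mV)
    (hpL : pp < lcpK k U V mU mV)
    (hU'' : ∀ a < mU, a ≠ pp → U'' a = U' a)
    (hV'' : ∀ a < mV, a ≠ pp → V'' a = V' a)
    (hpc : U'' pp = V'' pp) : IsMaxpair k U V U'' V'' mU mV := by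
  have hpL' : lcpK (k - 1) U V mU mV < lcpK k U V mU mV := by rw [← hpe]; exact hpL
  obtain ⟨hmm, hnom⟩ := mism_facts k mU mV hk U V hpL'
  rw [← hpe] at hmm hnom
  obtain ⟨hLU, hLV, _⟩ := lcpK_spec k U V mU mV
  intro a
  constructor
  · rintro ⟨haL, hne⟩
    rcases lt_trichotomy a pp with h | h | h
    · have h' : a < lcpK (k - 1) U V mU mV := by rw [← hpe]; exact h
      have hagree : U' a = V' a := (hmax a).1 ⟨h', hne⟩
      rw [hU'' a (lt_of_lt_of_le haL hLU) (ne_of_lt h),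
          hV'' a (lt_of_lt_of_le haL hLV) (ne_of_lt h), hagree]
    · subst h; exact hpc
    · exact absurd (hnom a h haL) hne
  · intro hn
    have hanp : a ≠ pp := fun he => hn (he ▸ ⟨hpL, hmm⟩)
    have hside : ¬(a < lcpK (k - 1) U V mU mV ∧ U a ≠ V a) := by
      rintro ⟨h1, h2⟩
      have h1' : a < pp := by rw [hpe]; exact h1
      exact hn ⟨lt_trans h1' hpL, h2⟩
    constructor
    · intro ham
      rw [hU'' a ham hanp]
      exact ((hmax a).2 hside).1 ham
    · intro ham
      rw [hV'' a ham hanp]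
      exact ((hmax a).2 hside).2 ham

/-- Extending a `(U,V)_{k-1}`-maxpair to a `(U,V)_k`-maxpair, by case analysis on the
letter `c` of the heavy path at position `p+1` (here `p`, 0-indexed). -/
theorem stmt12 (k mU mV : ℕ) (hk : 1 ≤ k) (U U' V V' : ℕ → α)
    (Δ Nb : Set (ℕ × α)) (p : ℕ) (c : α)
    (hΔ : MI U U' mU = Δ) (hNb : MI V V' mV = Nb)
    (hmax : IsMaxpair (k - 1) U V U' V' mU mV)
    (hp : p = lcpF U' V' mU mV) :
    (p < lcpK k U V mU mV → U p ≠ c → V p ≠ c →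
      ∀ U'' V'' : ℕ → α, MI U U'' mU = Δ ∪ {(p, c)} → MI V V'' mV = Nb ∪ {(p, c)} →
        IsMaxpair k U V U'' V'' mU mV) ∧
    (p < lcpK k U V mU mV → U p ≠ c → V p = c →
      ∀ U'' : ℕ → α, MI U U'' mU = Δ ∪ {(p, c)} →
        IsMaxpair k U V U'' V' mU mV) ∧
    (p < lcpK k U V mU mV → U p = c → V p ≠ c →
      ∀ V'' : ℕ → α, MI V V'' mV = Nb ∪ {(p, c)} →
        IsMaxpair k U V U' V'' mU mV) ∧
    (lcpK k U V mU mV = p → IsMaxpair k U V U' V' mU mV) := by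
  subst hΔ hNb
  have hpe : p = lcpK (k - 1) U V mU mV := hp.trans (p_eq k mU mV U U' V V' hmax)
  have hnotp : ¬(p < lcpK (k - 1) U V mU mV ∧ U p ≠ V p) := by
    rintro ⟨h1, _⟩
    rw [← hpe] at h1
    exact lt_irrefl p h1
  refine ⟨?_, ?_, ?_, ?_⟩
  · intro hpL _ _ U'' V'' hMU hMV
    obtain ⟨hU''p, hU''⟩ := MI_union U U' U'' mU p c hMU
    obtain ⟨hV''p, hV''⟩ := MI_union V V' V'' mV p c hMV
    exact build k mU mV p hk U V U'' V'' U' V' hmax hpe hpL hU'' hV''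
      (hU''p.trans hV''p.symm)
  · intro hpL _ hVc U'' hMU
    obtain ⟨hU''p, hU''⟩ := MI_union U U' U'' mU p c hMU
    have hpm : p < mV := lt_of_lt_of_le hpL (lcpK_spec k U V mU mV).2.1
    have hVp : V' p = V p := ((hmax p).2 hnotp).2 hpm
    exact build k mU mV p hk U V U'' V' U' V' hmax hpe hpL hU''
      (fun a _ _ => rfl) (by rw [hU''p, hVp, hVc])
  · intro hpL hUc _ V'' hMV
    obtain ⟨hV''p, hV''⟩ := MI_union V V' V'' mV p c hMV
    have hpm : p < mU := lt_of_lt_of_le hpL (lcpK_spec k U V mU mV).1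
    have hUp : U' p = U p := ((hmax p).2 hnotp).1 hpm
    exact build k mU mV p hk U V U' V'' U' V' hmax hpe hpL
      (fun a _ _ => rfl) hV'' (by rw [hV''p, hUp, hUc])
  · intro hL4
    have heq : lcpK k U V mU mV = lcpK (k - 1) U V mU mV := hL4.trans hpe
    unfold IsMaxpair at hmax ⊢
    rw [heq]
    exact hmax
end

section
/- Let U and V be strings of common length m with Hamming distance at most k, both containing the fragment positions [i, j) where U[i..j) = V[i..j), and let p = j − i. Suppose V = T[t..t+m) for a longer string T with t > p, and set V' = T[t−p..t−p+m). If the number of misperiods of V' with respect to positions [i+p, i+2p) is at most the number of misperiods of V with respect to [i, i+p), and if |Misper(U, i, i+p)| + |Misper(V, i, i+p)| ≤ k, then the Hamming distance between U and V' is at most k. -/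
/-- `a` is a misperiod of the length-`m` string `X` with respect to the fragment
`X[i..j)` (0-indexed): `X a ≠ X b` for the `b ∈ [i, j)` with `(j - i) ∣ (b - a)`. -/
def Misper {α : Type*} (X : ℕ → α) (m i j a : ℕ) : Prop :=
  a < m ∧ ∃ b, i ≤ b ∧ b < j ∧ ((j : ℤ) - (i : ℤ)) ∣ ((b : ℤ) - (a : ℤ)) ∧ X a ≠ X b

/-- Shifting one occurrence by the period: if `U =_k V`, `U[i..j) = V[i..j)` with
`p = j - i`, `V = T[t..t+m)` with `t > p` and `V' = T[t-p..t-p+m)`, the misperiod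
count of `V'` w.r.t. `[i+p, i+2p)` is at most that of `V` w.r.t. `[i, i+p)`, and
`|Misper(U,i,i+p)| + |Misper(V,i,i+p)| ≤ k`, then the Hamming distance of `U` and
`V'` is at most `k`. -/
theorem stmt14 {α : Type*} (T U V V' : ℕ → α) (m i j t p k : ℕ)
    (hp : p = j - i) (hij : i ≤ j) (hjm : j ≤ m) (htp : p < t)
    (hV : ∀ a, V a = T (t + a)) (hV' : ∀ a, V' a = T (t - p + a))
    (hham : ({a | a < m ∧ U a ≠ V a}).ncard ≤ k)
    (hagree : ∀ a, i ≤ a → a < j → U a = V a)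
    (hmisV' : ({a | Misper V' m (i + p) (i + 2 * p) a}).ncard ≤
      ({a | Misper V m i (i + p) a}).ncard)
    (htot : ({a | Misper U m i (i + p) a}).ncard +
      ({a | Misper V m i (i + p) a}).ncard ≤ k) :
    ({a | a < m ∧ U a ≠ V' a}).ncard ≤ k := by
  rcases Nat.eq_zero_or_pos p with hp0 | hp0
  · have hVV : ∀ a, V' a = V a := by
      intro a; rw [hV', hV, hp0, Nat.sub_zero]
    have : {a | a < m ∧ U a ≠ V' a} = {a | a < m ∧ U a ≠ V a} := by
      ext a; simp [hVV]
    rw [this]; exact hham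
  · have hj : j = i + p := by omega
    have hsub : {a | a < m ∧ U a ≠ V' a} ⊆
        {a | Misper U m i (i + p) a} ∪ {a | Misper V' m (i + p) (i + 2 * p) a} := by
      rintro a ⟨ham, hne⟩
      by_contra h
      simp only [Set.mem_union, Set.mem_setOf_eq, Misper, not_or, not_and, not_exists] at h
      obtain ⟨h1, h2⟩ := h
      -- construct the canonical b in [i, i+p) with p ∣ b - a
      set r : ℤ := ((a : ℤ) - i) % p with hr
      have hr0 : 0 ≤ r := Int.emod_nonneg _ (by exact_mod_cast hp0.ne')
      have hrp : r < (p : ℤ) := Int.emod_lt_of_pos _ (by exact_mod_cast hp0)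
      set b : ℕ := i + r.toNat with hb
      have hbZ : (b : ℤ) = i + r := by
        simp [hb, Int.toNat_of_nonneg hr0]
      have hbge : i ≤ b := Nat.le_add_right _ _
      have hblt : b < i + p := by
        have : (b : ℤ) < i + p := by rw [hbZ]; omega
        exact_mod_cast this
      have hdvd : (p : ℤ) ∣ ((b : ℤ) - a) := by
        have h0 : (p : ℤ) ∣ ((a : ℤ) - i) - r := Int.dvd_self_sub_of_emod_eq rfl
        have : (b : ℤ) - a = -(((a : ℤ) - i) - r) := by rw [hbZ]; ring
        rw [this]; exact dvd_neg.2 h0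
      have hUab : U a = U b := by
        by_contra hne'
        exact (h1 ham) b hbge hblt (by simpa using hdvd) hne'
      have hdvd2 : ((i : ℤ) + 2 * p - (i + p)) ∣ (((b + p : ℕ) : ℤ) - a) := by
        have : ((i : ℤ) + 2 * p - (i + p)) = p := by ring
        rw [this]
        have : (((b + p : ℕ) : ℤ) - a) = ((b : ℤ) - a) + p := by push_cast; ring
        rw [this]; exact dvd_add hdvd dvd_rfl
      have hV'ab : V' a = V' (b + p) := by
        by_contra hne'
        exact (h2 ham) (b + p) (by omega) (by omega) (by push_cast at hdvd2 ⊢; convert hdvd2 using 2 <;> push_cast <;> ring) hne'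
      have hV'b : V' (b + p) = V b := by
        rw [hV', hV]
        congr 1; omega
      have hVb : V b = U b := (hagree b hbge (by omega)).symm
      exact hne (by rw [hUab, ← hVb, ← hV'b, ← hV'ab])
    have hfin1 : {a | Misper U m i (i + p) a}.Finite :=
      (Set.finite_Iio m).subset (fun a ha => ha.1)
    have hfin2 : {a | Misper V' m (i + p) (i + 2 * p) a}.Finite :=
      (Set.finite_Iio m).subset (fun a ha => ha.1)
    calc ({a | a < m ∧ U a ≠ V' a}).ncard
        ≤ ({a | Misper U m i (i + p) a} ∪ {a | Misper V' m (i + p) (i + 2 * p) a}).ncard :=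
          Set.ncard_le_ncard hsub (hfin1.union hfin2)
      _ ≤ ({a | Misper U m i (i + p) a}).ncard + ({a | Misper V' m (i + p) (i + 2 * p) a}).ncard :=
          Set.ncard_union_le _ _
      _ ≤ ({a | Misper U m i (i + p) a}).ncard + ({a | Misper V m i (i + p) a}).ncard :=
          add_le_add le_rfl hmisV'
      _ ≤ k := htot
end

section
/- Let G be a set of string pairs, k1, k2 ≥ 0, and for i ∈ {1,2} let F_i = {F_i : (F_1, F_2) ∈ G} (the projections) and let B_i be a k_i-complete family for F_i. Define G' = { {(F_1^{Δ1}, F_2^{Δ2}) ∈ F'_1 × F'_2 : (F_1, F_2) ∈ G} : (F'_1, F'_2) ∈ B_1 × B_2 } \ {∅}. Then G' is a (k1, k2)-bicomplete family for G. -/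
/-- A string: a function on positions `0, …, length - 1` together with its length. -/
abbrev Str (α : Type*) := (ℕ → α) × ℕ

/-- A modified string: a source string together with a set of substitutions. -/
abbrev ModStr (α : Type*) := Str α × Set (ℕ × α)

variable {α : Type*}

/-- `Δ` is a valid substitution set for the string `F`: all positions are in range,
all substitutions actually change a letter, and at most one substitution per position
(this guarantees `MI(F, F^Δ) = Δ`). -/
def ModValid (F : Str α) (Δ : Set (ℕ × α)) : Prop :=
  (∀ q ∈ Δ, q.1 < F.2 ∧ F.1 q.1 ≠ q.2) ∧
  (∀ q q', q ∈ Δ → q' ∈ Δ → q.1 = q'.1 → q.2 = q'.2)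

open Classical in
/-- The modified string `F^Δ`, as a function on positions. -/
noncomputable def applyMod (F : Str α) (Δ : Set (ℕ × α)) : ℕ → α := fun a =>
  if h : ∃ c, (a, c) ∈ Δ then h.choose else F.1 a

/-- `LCP_k`: maximal `ℓ` such that the length-`ℓ` prefixes of `U` and `V` have
Hamming distance at most `k`. -/
noncomputable def lcpKS (k : ℕ) (U V : Str α) : ℕ :=
  sSup {ℓ | ℓ ≤ U.2 ∧ ℓ ≤ V.2 ∧ ({a | a < ℓ ∧ U.1 a ≠ V.1 a}).ncard ≤ k}

/-- `(U^Δ, V^∇)` forms a `(U,V)_k`-maxpair (0-indexed positions). -/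
def IsMaxpairS (k : ℕ) (U V : Str α) (Δ Nb : Set (ℕ × α)) : Prop :=
  ∀ a : ℕ,
    (a < lcpKS k U V ∧ U.1 a ≠ V.1 a → applyMod U Δ a = applyMod V Nb a) ∧
    (¬(a < lcpKS k U V ∧ U.1 a ≠ V.1 a) →
      (a < U.2 → applyMod U Δ a = U.1 a) ∧ (a < V.2 → applyMod V Nb a = V.1 a))

/-- `𝔉` is a `k`-complete family for the set of strings `F`. -/
def KComplete (k : ℕ) (F : Set (Str α)) (𝔉 : Set (Set (ModStr α))) : Prop :=
  (∀ F' ∈ 𝔉, ∀ x ∈ F', x.1 ∈ F ∧ ModValid x.1 x.2 ∧ x.2.ncard ≤ k) ∧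
  (∀ U ∈ F, ∀ V ∈ F, ∃ F' ∈ 𝔉, ∃ Δ Nb,
    (U, Δ) ∈ F' ∧ (V, Nb) ∈ F' ∧ IsMaxpairS k U V Δ Nb)

/-- `𝔊` is a `(k1, k2)`-bicomplete family for the set of string pairs `G`. -/
def BiComplete (k1 k2 : ℕ) (G : Set (Str α × Str α))
    (𝔊 : Set (Set (ModStr α × ModStr α))) : Prop :=
  (∀ G' ∈ 𝔊, ∀ x ∈ G', (x.1.1, x.2.1) ∈ G ∧
    ModValid x.1.1 x.1.2 ∧ ModValid x.2.1 x.2.2 ∧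
    x.1.2.ncard ≤ k1 ∧ x.2.2.ncard ≤ k2) ∧
  (∀ U ∈ G, ∀ V ∈ G, ∃ G' ∈ 𝔊, ∃ Δ1 Δ2 Nb1 Nb2,
    ((U.1, Δ1), (U.2, Δ2)) ∈ G' ∧ ((V.1, Nb1), (V.2, Nb2)) ∈ G' ∧
    IsMaxpairS k1 U.1 V.1 Δ1 Nb1 ∧ IsMaxpairS k2 U.2 V.2 Δ2 Nb2)

/-- Combining a `k1`-complete family for the first projections of `G` with a
`k2`-complete family for the second projections yields a `(k1,k2)`-bicomplete
family for `G`, by taking, for each pair of sets, all pairs of modified strings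
whose sources form a pair in `G` (discarding the empty set). -/
theorem stmt16 (G : Set (Str α × Str α)) (k1 k2 : ℕ)
    (B1 B2 : Set (Set (ModStr α)))
    (hB1 : KComplete k1 (Prod.fst '' G) B1)
    (hB2 : KComplete k2 (Prod.snd '' G) B2) :
    BiComplete k1 k2 G
      ({S | S.Nonempty ∧ ∃ F1' ∈ B1, ∃ F2' ∈ B2,
        S = {x : ModStr α × ModStr α |
          (x.1.1, x.2.1) ∈ G ∧ x.1 ∈ F1' ∧ x.2 ∈ F2'}}) := by
  constructor
  · rintro G' ⟨-, F1', hF1', F2', hF2', rfl⟩ x ⟨hxG, hx1, hx2⟩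
    obtain ⟨-, hv1, hc1⟩ := hB1.1 F1' hF1' x.1 hx1
    obtain ⟨-, hv2, hc2⟩ := hB2.1 F2' hF2' x.2 hx2
    exact ⟨hxG, hv1, hv2, hc1, hc2⟩
  · intro U hU V hV
    obtain ⟨F1', hF1', Δ1, Nb1, hUΔ1, hVN1, hmp1⟩ :=
      hB1.2 U.1 ⟨U, hU, rfl⟩ V.1 ⟨V, hV, rfl⟩
    obtain ⟨F2', hF2', Δ2, Nb2, hUΔ2, hVN2, hmp2⟩ :=
      hB2.2 U.2 ⟨U, hU, rfl⟩ V.2 ⟨V, hV, rfl⟩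
    refine ⟨{x : ModStr α × ModStr α |
        (x.1.1, x.2.1) ∈ G ∧ x.1 ∈ F1' ∧ x.2 ∈ F2'},
      ⟨⟨((U.1, Δ1), (U.2, Δ2)), by simpa using ⟨hU, hUΔ1, hUΔ2⟩⟩,
        F1', hF1', F2', hF2', rfl⟩,
      Δ1, Δ2, Nb1, Nb2, by simpa using ⟨hU, hUΔ1, hUΔ2⟩,
      by simpa using ⟨hV, hVN1, hVN2⟩, hmp1, hmp2⟩
end

section
/- Let P be a set of pairs whose lexicographic order by second component lists elements of two colours (red from P, blue from Q). Suppose (P1,P2) ∈ P and (Q1,Q2) ∈ Q achieve maxPairLCP(P,Q), with |P1| ≤ |Q1| and (Q1,Q2) preceding (P1,P2) in the order, and all first components are prefixes of a common string Y. Let (Y1,Y2) be the latest element of Q preceding (P1,P2) with |Y1| ≥ |P1|. Then LCP(P1,Y1) + LCP(P2,Y2) ≥ LCP(P1,Q1) + LCP(P2,Q2). -/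
/-- Length of the longest common prefix of two lists. -/
def lcp {α : Type*} [DecidableEq α] : List α → List α → ℕ
  | a :: as, b :: bs => if a = b then lcp as bs + 1 else 0
  | _, _ => 0

/-- `maxPairLCP(P, Q) = max { LCP(P1,Q1) + LCP(P2,Q2) : (P1,P2) ∈ P, (Q1,Q2) ∈ Q }`. -/
noncomputable def maxPairLCP {α : Type*} [DecidableEq α]
    (P Q : Set (List α × List α)) : ℕ :=
  sSup {v | ∃ p ∈ P, ∃ q ∈ Q, v = lcp p.1 q.1 + lcp p.2 q.2}

/-!
Every first component is a prefix of `Y`, so `P1`, being no longer than `Q1` and `Y1`, is a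
prefix of both, and both first-component LCPs equal `|P1|`. By the choice of `Y` we have
`Q2 ≤ Y2 ≤ P2`, and in lexicographic order a string between `Q2` and `P2` shares at least as
long a prefix with `P2` as `Q2` does.
-/

section
variable {α : Type*}

lemma lcp_eq_length_of_prefix [DecidableEq α] :
    ∀ {a b : List α}, a <+: b → lcp a b = a.length
  | [], b, _ => by cases b <;> rfl
  | _ :: _, [], h => by simp at h
  | a :: as, b :: bs, h => by
    obtain ⟨rfl, h'⟩ := List.cons_prefix_cons.mp h
    simp [lcp, lcp_eq_length_of_prefix h']

-- Under `LinearOrder α`, Mathlib's `≤` on `List α` is `Lex (· < ·) ∨ (· = ·)`, not core's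
-- `¬ Lex (· < ·) b a`, so core's `List.cons_le_cons_iff` does not apply.
lemma cons_le_cons_iff_lex [LinearOrder α] {a b : α} {as bs : List α} :
    a :: as ≤ b :: bs ↔ a < b ∨ a = b ∧ as ≤ bs := by
  simp only [le_iff_lt_or_eq, List.cons.injEq]
  change List.Lex (· < ·) _ _ ∨ _ ↔ _ ∨ _ ∧ (List.Lex (· < ·) _ _ ∨ _)
  rw [List.cons_lex_cons_iff]
  tauto

lemma lcp_le_lcp_of_le_of_le [LinearOrder α] :
    ∀ {a b c : List α}, a ≤ b → b ≤ c → lcp c a ≤ lcp c b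
  | _, _, [], _, _ => by simp [lcp]
  | [], _, _ :: _, _, _ => by simp [lcp]
  | _ :: _, [], _ :: _, hab, _ => absurd hab (not_le.mpr List.Lex.nil)
  | x :: as, y :: bs, z :: cs, hab, hbc => by
    by_cases hzx : z = x
    · subst hzx
      rcases cons_le_cons_iff_lex.mp hab with hzy | ⟨rfl, hab'⟩
      · exfalso
        rcases cons_le_cons_iff_lex.mp hbc with hyz | ⟨rfl, -⟩ <;> order
      · rcases cons_le_cons_iff_lex.mp hbc with hzz | ⟨-, hbc'⟩
        · exact absurd hzz (lt_irrefl z)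
        · simpa [lcp] using lcp_le_lcp_of_le_of_le hab' hbc'
    · simp [lcp, hzx]

end

theorem stmt18_general {α : Type*} [LinearOrder α] (P Q : Set (List α × List α))
    (Y P1 P2 Q1 Q2 Y1 Y2 : List α)
    (hPmem : (P1, P2) ∈ P) (hQmem : (Q1, Q2) ∈ Q)
    (hlen : P1.length ≤ Q1.length)
    (hord : Q2 ≤ P2)
    (hprefix : ∀ e ∈ P ∪ Q, e.1 <+: Y)
    (hYmem : (Y1, Y2) ∈ Q)
    (hYlen : P1.length ≤ Y1.length)
    (hYord : Y2 ≤ P2)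
    (hYlatest : ∀ z ∈ Q, P1.length ≤ z.1.length → z.2 ≤ P2 → z.2 ≤ Y2) :
    lcp P1 Q1 + lcp P2 Q2 ≤ lcp P1 Y1 + lcp P2 Y2 := by
  have hP1 : P1 <+: Y := hprefix _ (Or.inl hPmem)
  have hQ1 : lcp P1 Q1 = P1.length := lcp_eq_length_of_prefix <|
    List.prefix_of_prefix_length_le hP1 (hprefix _ (Or.inr hQmem)) hlen
  have hY1 : lcp P1 Y1 = P1.length := lcp_eq_length_of_prefix <|
    List.prefix_of_prefix_length_le hP1 (hprefix _ (Or.inr hYmem)) hYlen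
  have hQ2Y2 : Q2 ≤ Y2 := hYlatest _ hQmem hlen hord
  have hP2 : lcp P2 Q2 ≤ lcp P2 Y2 := lcp_le_lcp_of_le_of_le hQ2Y2 hYord
  omega

/-- If `(P1,P2) ∈ P` and `(Q1,Q2) ∈ Q` achieve `maxPairLCP(P,Q)` with `|P1| ≤ |Q1|`
and `(Q1,Q2)` preceding `(P1,P2)` in the lexicographic order by second components,
all first components being prefixes of a common string `Y`, and `(Y1,Y2)` is the
latest element of `Q` preceding `(P1,P2)` with `|Y1| ≥ |P1|`, then
`LCP(P1,Y1) + LCP(P2,Y2) ≥ LCP(P1,Q1) + LCP(P2,Q2)`. -/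
theorem stmt18 {α : Type*} [LinearOrder α] (P Q : Set (List α × List α))
    (Y P1 P2 Q1 Q2 Y1 Y2 : List α)
    (hPmem : (P1, P2) ∈ P) (hQmem : (Q1, Q2) ∈ Q)
    (hopt : maxPairLCP P Q = lcp P1 Q1 + lcp P2 Q2)
    (hlen : P1.length ≤ Q1.length)
    (hord : Q2 ≤ P2)
    (hprefix : ∀ e ∈ P ∪ Q, e.1 <+: Y)
    (hYmem : (Y1, Y2) ∈ Q)
    (hYlen : P1.length ≤ Y1.length)
    (hYord : Y2 ≤ P2)
    (hYlatest : ∀ z ∈ Q, P1.length ≤ z.1.length → z.2 ≤ P2 → z.2 ≤ Y2) :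
    lcp P1 Q1 + lcp P2 Q2 ≤ lcp P1 Y1 + lcp P2 Y2 :=
  stmt18_general P Q Y P1 P2 Q1 Q2 Y1 Y2 hPmem hQmem hlen hord hprefix hYmem hYlen hYord hYlatest
end
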